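/- Let T be a computable tree of finite binary strings with at least one infinite path, and let X be the rightmost infinite path through T (i.e., X(m) = 0 if and only if no infinite path through T extends (X ↾ m)⌢1). Then the complement of X is enumeration reducible to X, and moreover this reduction is witnessed by a computably enumerable set C of pairs (m, E) such that m ∉ X if and only if there is a finite set E ⊆ X with (m, E) ∈ C. -/

import Mathlib

open Classical in
/-- The characteristic (total) function of a set of naturals, as a partial function. -/
noncomputable def chi (X : Set ℕ) : ℕ →. ℕ :=
  fun n => Part.some (if n ∈ X then 1 else 0)

/-- Partial functions computable relative to an oracle `O`. -/
inductive RecursiveInOracle (O : ℕ →. ℕ) : (ℕ →. ℕ) → Prop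
  | zero : RecursiveInOracle O fun _ => 0
  | succ : RecursiveInOracle O Nat.succ
  | left : RecursiveInOracle O fun n => (Nat.unpair n).1
  | right : RecursiveInOracle O fun n => (Nat.unpair n).2
  | oracle : RecursiveInOracle O O
  | pair {f g : ℕ →. ℕ} : RecursiveInOracle O f → RecursiveInOracle O g →
      RecursiveInOracle O fun n => Nat.pair <$> f n <*> g n
  | comp {f g : ℕ →. ℕ} : RecursiveInOracle O f → RecursiveInOracle O g →
      RecursiveInOracle O fun n => g n >>= f
  | prec {f g : ℕ →. ℕ} : RecursiveInOracle O f → RecursiveInOracle O g →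
      RecursiveInOracle O (Nat.unpaired fun a n =>
        n.rec (f a) fun y IH => do let i ← IH; g (Nat.pair a (Nat.pair y i)))
  | rfind {f : ℕ →. ℕ} : RecursiveInOracle O f →
      RecursiveInOracle O fun a => Nat.rfind fun n => (fun m => m = 0) <$> f (Nat.pair a n)

/-- `X ≤_T Y` : `X` is computable with oracle `Y`. -/
def TuringLE (X Y : Set ℕ) : Prop := RecursiveInOracle (chi Y) (chi X)

/-- `X` is c.e.(`Y`) : `X` is the domain of a partial function computable with oracle `Y`. -/
def CEIn (Y X : Set ℕ) : Prop := ∃ f : ℕ →. ℕ, RecursiveInOracle (chi Y) f ∧ X = f.Dom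

/-- `X` is relatively c.e. -/
def RelativelyCE (X : Set ℕ) : Prop := ∃ Y : Set ℕ, CEIn Y X ∧ ¬ TuringLE X Y

/-- A computably enumerable predicate (unrelativized). -/
def CEPred {α : Type} [Primcodable α] (p : α → Prop) : Prop :=
  ∃ f : α →. Unit, Partrec f ∧ ∀ a, p a ↔ (f a).Dom

/-- `A ≤_e B` : enumeration reducibility. -/
def EnumLE (A B : Set ℕ) : Prop :=
  ∃ C : Set (ℕ × Finset ℕ), CEPred (· ∈ C) ∧
    ∀ n, n ∈ A ↔ ∃ E : Finset ℕ, ↑E ⊆ B ∧ (n, E) ∈ C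

open Classical in
/-- `X ↾ k` : the binary string of the first `k` values of the characteristic function. -/
noncomputable def seg (X : Set ℕ) (k : ℕ) : List Bool :=
  (List.range k).map fun n => decide (n ∈ X)

/-- `X` is 1-generic. -/
def OneGeneric (X : Set ℕ) : Prop :=
  ∀ S : Set (List Bool), CEPred (· ∈ S) →
    (∃ k, seg X k ∈ S) ∨ (∃ k, ∀ σ : List Bool, seg X k <+: σ → σ ∉ S)

/-- `X` is an infinite path through the tree `T`. -/
def IsPath (T : Set (List Bool)) (X : Set ℕ) : Prop := ∀ k, seg X k ∈ T

/-- `T` is a computable tree of finite binary strings. -/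
def ComputableTree (T : Set (List Bool)) : Prop :=
  (∀ σ τ : List Bool, σ ∈ T → τ <+: σ → τ ∈ T) ∧ ComputablePred (· ∈ T)

/-!
Write `σ = X ↾ j`. By the rightmost-path property and König's lemma, `j ∉ X` exactly when the
right turn `σ⌢1` has no infinite extension in `T`, i.e. when for some `k` no extension of `σ⌢1`
of length `k` lies in `T`; given `σ` this is a `Σ⁰₁` condition. The finite set `E = X ∩ [0, m)`
names the ones of `X ↾ m`, and each zero below `m`, as well as `m` itself, is then certified by
such a dead right turn. Conversely, a certificate with `E ⊆ X` forces `E` to agree with `X`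
below `m`, bit by bit from the left, and so shows `m ∉ X`.
-/

open Denumerable Encodable

section Computability

variable {α β : Type*} [Primcodable α] [Primcodable β]

namespace ComputablePred

theorem comp {p : β → Prop} {f : α → β} (hp : ComputablePred p) (hf : Computable f) :
    ComputablePred fun a => p (f a) := by
  obtain ⟨_, hp⟩ := hp
  exact ⟨inferInstance, hp.comp hf⟩

theorem or {p q : α → Prop} (hp : ComputablePred p) (hq : ComputablePred q) :
    ComputablePred fun a => p a ∨ q a := by
  classical
  exact Computable.computablePred <|
    (Primrec.or.to_comp.comp hp.decide hq.decide).of_eq fun a => by simp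

theorem forall_lt {p : α → ℕ → Prop} {n : α → ℕ} (hn : Computable n)
    (hp : ComputablePred fun x : α × ℕ => p x.1 x.2) :
    ComputablePred fun a => ∀ i < n a, p a i := by
  classical
  have hstep : Computable₂ fun a (x : ℕ × Bool) => x.2 && decide (p a x.1) :=
    Primrec.and.to_comp.comp (Computable.snd.comp Computable.snd)
      (hp.decide.comp (Computable.fst.pair (Computable.fst.comp Computable.snd)))
  refine Computable.computablePred <|
    (Computable.nat_rec hn (Computable.const true) hstep).of_eq fun a => ?_
  induction n a with
  | zero => simp
  | succ k ih => simp only [Nat.forall_lt_succ_right, Bool.decide_and, ih]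

theorem forall_mem [Inhabited β] {p : α → β → Prop} {l : α → List β} (hl : Computable l)
    (hp : ComputablePred fun x : α × β => p x.1 x.2) :
    ComputablePred fun a => ∀ b ∈ l a, p a b :=
  (forall_lt (p := fun a i => p a ((l a).getI i)) (Computable.list_length.comp hl)
    (hp.comp (Computable.fst.pair
      (Primrec.list_getI.to_comp.comp (hl.comp Computable.fst) Computable.snd)))).of_eq
    fun a => by
      simp only [List.forall_mem_iff_getElem]
      exact forall₂_congr fun i hi => by rw [List.getI_eq_getElem _ hi]

end ComputablePred

theorem cePred_exists_of_computablePred {α : Type} [Primcodable α] {p : α → ℕ → Prop}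
    (hp : ComputablePred fun x : α × ℕ => p x.1 x.2) : CEPred fun a => ∃ k, p a k := by
  classical
  refine ⟨fun a => (Nat.rfind fun k => Part.some (decide (p a k))).map fun _ => (), ?_, ?_⟩
  · have hdec : Computable₂ fun a k => decide (p a k) := hp.decide
    exact (Partrec.rfind hdec.partrec₂).map (Computable.const ()).to₂
  · intro a
    rw [Part.map_Dom]
    exact ⟨fun ⟨k, hk⟩ => Nat.rfind_dom.2 ⟨k, by simpa using hk, fun _ => trivial⟩,
      fun h => ⟨_, by simpa using Nat.rfind_spec (Part.get_mem h)⟩⟩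

end Computability

theorem raise'_eq_map_add : ∀ (l : List ℕ) (n : ℕ), raise' l n = (raise' l 0).map (· + n)
  | [], _ => rfl
  | m :: l, n => by
    simp only [raise', List.map_cons, List.map_map, raise'_eq_map_add l (m + n + 1),
      raise'_eq_map_add l (m + 1)]
    congr 2
    funext i
    simp only [Function.comp_apply]
    omega

theorem primrec_raise'_zero : Primrec fun l => raise' l 0 := by
  have hstep : Primrec₂ fun (_ : List ℕ) (x : ℕ × List ℕ) => x.1 :: x.2.map (· + (x.1 + 1)) :=
    Primrec.list_cons.comp (Primrec.fst.comp Primrec.snd)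
      (Primrec.list_map (Primrec.snd.comp Primrec.snd)
        (Primrec.nat_add.comp Primrec.snd
          (Primrec.succ.comp (Primrec.fst.comp (Primrec.snd.comp Primrec.fst)))))
  refine (Primrec.list_foldr Primrec.id (Primrec.const []) hstep).of_eq fun l => ?_
  induction l with
  | nil => rfl
  | cons m l ih =>
    simp only [id, List.foldr_cons] at ih ⊢
    rw [ih, raise', raise'_eq_map_add l (m + 1)]
    rfl

/-- `Finset ℕ` is encoded through the list of gaps between its consecutive elements, which
`raise'` turns back into the sorted list of elements. -/
theorem mem_ofNat_finset_iff (n j : ℕ) :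
    j ∈ ofNat (Finset ℕ) n ↔ j ∈ raise' (ofNat (List ℕ) n) 0 := by
  rw [ofNat_of_decode rfl]
  simp only [eqv, Equiv.symm_mk, raise'Finset, Equiv.coe_fn_mk, Finset.mem_map_equiv, encode_nat]
  exact Iff.rfl

theorem Primrec.finset_mem : PrimrecRel fun (j : ℕ) (E : Finset ℕ) => j ∈ E := by
  have hlist : PrimrecRel fun (j : ℕ) (l : List ℕ) => j ∈ l :=
    (PrimrecRel.exists_mem_list Primrec.eq).swap.of_eq fun j l => by simp
  exact (hlist.comp Primrec.fst
    (primrec_raise'_zero.comp ((Primrec.ofNat _).comp (Primrec.encode.comp Primrec.snd)))).of_eq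
    fun x => by rw [← mem_ofNat_finset_iff, ofNat_encode]

def bitStrings : ℕ → List (List Bool)
  | 0 => [[]]
  | k + 1 => (bitStrings k).flatMap fun σ => [false :: σ, true :: σ]

theorem mem_bitStrings {k : ℕ} {σ : List Bool} : σ ∈ bitStrings k ↔ σ.length = k := by
  induction k generalizing σ with
  | zero => simp [bitStrings, List.length_eq_zero_iff]
  | succ k ih =>
    cases σ with
    | nil => simp [bitStrings]
    | cons b σ => cases b <;> simp [bitStrings, ih]

theorem primrec_bitStrings : Primrec bitStrings := by
  have hstep : Primrec₂ fun (_ : ℕ) (L : List (List Bool)) =>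
      L.flatMap fun σ => [false :: σ, true :: σ] :=
    Primrec.list_flatMap Primrec.snd <| Primrec.list_cons.comp
      (Primrec.list_cons.comp (Primrec.const false) Primrec.snd) <| Primrec.list_cons.comp
      (Primrec.list_cons.comp (Primrec.const true) Primrec.snd) (Primrec.const [])
  refine (Primrec.nat_rec₁ [[]] hstep).of_eq fun k => ?_
  induction k with
  | zero => rfl
  | succ k ih => simp only [bitStrings, ← ih]

open Classical in
theorem seg_succ (X : Set ℕ) (k : ℕ) : seg X (k + 1) = seg X k ++ [decide (k ∈ X)] := by
  simp [seg, List.range_succ]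

theorem length_seg (X : Set ℕ) (k : ℕ) : (seg X k).length = k := by
  simp [seg]

theorem seg_prefix_seg (X : Set ℕ) {a b : ℕ} (h : a ≤ b) : seg X a <+: seg X b := by
  rw [List.prefix_iff_eq_take, length_seg, seg, seg, ← List.map_take, List.take_range,
    min_eq_left h]

theorem seg_congr {A B : Set ℕ} {n : ℕ} (h : ∀ i < n, i ∈ A ↔ i ∈ B) : seg A n = seg B n :=
  List.map_congr_left fun i hi => decide_eq_decide.2 (h i (List.mem_range.1 hi))

theorem primrec_seg_coe : Primrec₂ fun (E : Finset ℕ) (n : ℕ) => seg (↑E) n := by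
  classical
  refine (Primrec.list_map (Primrec.list_range.comp Primrec.snd)
    (Primrec.finset_mem.decide.comp Primrec.snd (Primrec.fst.comp Primrec.fst)).to₂).of_eq
    fun x => ?_
  simp [seg]

theorem exists_seg_prefix (L : ℕ → List Bool) (hL : ∀ n, L n <+: L (n + 1))
    (hlen : ∀ n, n ≤ (L n).length) : ∃ Z : Set ℕ, ∀ n, seg Z n <+: L n := by
  set Z : Set ℕ := {i | (L (i + 1)).getD i false}
  refine ⟨Z, fun n => ?_⟩
  induction n with
  | zero => exact List.nil_prefix
  | succ n ih =>
    have hn : n < (L (n + 1)).length := hlen (n + 1)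
    have hpre : seg Z n = (L (n + 1)).take n := by
      simpa only [length_seg] using List.prefix_iff_eq_take.1 (ih.trans (hL n))
    rw [seg_succ, hpre]
    convert List.take_prefix (n + 1) (L (n + 1)) using 1
    rw [List.take_succ_eq_append_getElem hn]
    simp [Z, List.getElem?_eq_getElem hn]

def PrefixClosed (T : Set (List Bool)) : Prop :=
  ∀ σ τ : List Bool, σ ∈ T → τ <+: σ → τ ∈ T

def ExtendsTo (T : Set (List Bool)) (ρ : List Bool) (k : ℕ) : Prop :=
  ∃ μ : List Bool, μ.length = k ∧ ρ ++ μ ∈ T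

def Extendible (T : Set (List Bool)) (ρ : List Bool) : Prop :=
  ∀ k, ExtendsTo T ρ k

section Tree

variable {T : Set (List Bool)}

theorem ExtendsTo.mono (hT : PrefixClosed T) {ρ : List Bool} {k k' : ℕ}
    (h : ExtendsTo T ρ k') (hk : k ≤ k') : ExtendsTo T ρ k := by
  obtain ⟨μ, rfl, hμ⟩ := h
  refine ⟨μ.take k, List.length_take_of_le hk, hT _ _ hμ ?_⟩
  exact (List.prefix_append_right_inj ρ).2 (List.take_prefix _ _)

theorem Extendible.mem {ρ : List Bool} (h : Extendible T ρ) : ρ ∈ T := by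
  obtain ⟨μ, hμ, hmem⟩ := h 0
  rwa [List.length_eq_zero_iff.1 hμ, List.append_nil] at hmem

theorem Extendible.exists_append (hT : PrefixClosed T) {ρ : List Bool} (h : Extendible T ρ) :
    ∃ b, Extendible T (ρ ++ [b]) := by
  by_contra! hdead
  simp only [Extendible, not_forall] at hdead
  choose K hK using hdead
  obtain ⟨_ | ⟨b, μ⟩, hlen, hmem⟩ := h (max (K false) (K true) + 1)
  · simp at hlen
  · refine hK b (ExtendsTo.mono hT ⟨μ, rfl, by simpa using hmem⟩ ?_)
    cases b <;> simp at hlen <;> omega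

theorem IsPath.extendible {Z : Set ℕ} (hZ : IsPath T Z) (n : ℕ) : Extendible T (seg Z n) := by
  intro k
  obtain ⟨μ, hμ⟩ := seg_prefix_seg Z (Nat.le_add_right n k)
  have hlen := congrArg List.length hμ
  simp only [List.length_append, length_seg] at hlen
  exact ⟨μ, by omega, hμ ▸ hZ (n + k)⟩

theorem Extendible.exists_path (hT : PrefixClosed T) {ρ : List Bool} (hρ : Extendible T ρ) :
    ∃ Z : Set ℕ, IsPath T Z ∧ seg Z ρ.length = ρ := by
  choose! next hnext using fun σ (hσ : Extendible T σ) => hσ.exists_append hT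
  let L : ℕ → List Bool := fun n => Nat.rec ρ (fun _ σ => σ ++ [next σ]) n
  have hLsucc (n : ℕ) : L (n + 1) = L n ++ [next (L n)] := rfl
  have hLext (n : ℕ) : Extendible T (L n) := by
    induction n with
    | zero => exact hρ
    | succ n ih => exact hLsucc n ▸ hnext _ ih
  have hLlen (n : ℕ) : (L n).length = ρ.length + n := by
    induction n with
    | zero => rfl
    | succ n ih => simp [hLsucc, ih, Nat.add_assoc]
  have hρL (n : ℕ) : ρ <+: L n := by
    induction n with
    | zero => exact List.prefix_rfl
    | succ n ih => exact ih.trans (hLsucc n ▸ List.prefix_append _ _)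
  obtain ⟨Z, hZ⟩ := exists_seg_prefix L (fun n => hLsucc n ▸ List.prefix_append _ _)
    (fun n => by rw [hLlen]; omega)
  refine ⟨Z, fun n => hT _ _ (hLext n).mem (hZ n), ?_⟩
  exact List.IsPrefix.eq_of_length
    (List.prefix_of_prefix_length_le (hZ _) (hρL _) (by simp [length_seg])) (length_seg _ _)

end Tree

section Rightmost

variable {T : Set (List Bool)} {X : Set ℕ}

theorem notMem_iff_not_extendible (hT : PrefixClosed T)
    (hrm : ∀ m : ℕ, m ∉ X ↔ ¬ ∃ Z : Set ℕ, IsPath T Z ∧ seg Z (m + 1) = seg X m ++ [true])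
    (m : ℕ) : m ∉ X ↔ ¬ Extendible T (seg X m ++ [true]) := by
  rw [hrm, not_iff_not]
  constructor
  · rintro ⟨Z, hZ, hseg⟩
    exact hseg ▸ hZ.extendible (m + 1)
  · intro h
    simpa [length_seg] using h.exists_path hT

/-- Read `E` as a guess for `X ↾ m`: the right turns it does not take below `m`, and the right
turn at `m`, all die in `T` within `k` levels. -/
def Certifies (T : Set (List Bool)) (m : ℕ) (E : Finset ℕ) (k : ℕ) : Prop :=
  ∀ j ≤ m, (j < m ∧ j ∈ E) ∨ ¬ ExtendsTo T (seg (↑E) j ++ [true]) k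

theorem exists_certifies_of_notMem (hT : PrefixClosed T)
    (hX : ∀ j ∉ X, ¬ Extendible T (seg X j ++ [true])) {m : ℕ} (hm : m ∉ X) :
    ∃ E : Finset ℕ, ↑E ⊆ X ∧ ∃ k, Certifies T m E k := by
  classical
  have hdepth (j : ℕ) : ∃ k, j ∉ X → ¬ ExtendsTo T (seg X j ++ [true]) k := by
    by_cases hj : j ∈ X
    · exact ⟨0, fun h => (h hj).elim⟩
    · obtain ⟨k, hk⟩ := not_forall.1 (hX j hj)
      exact ⟨k, fun _ => hk⟩
  choose K hK using hdepth
  let E := (Finset.range m).filter (· ∈ X)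
  have hmemE {i : ℕ} : i ∈ E ↔ i < m ∧ i ∈ X := by simp [E]
  refine ⟨E, fun i hi => (hmemE.1 hi).2, (Finset.range (m + 1)).sup K, fun j hj => ?_⟩
  by_cases hjE : j < m ∧ j ∈ E
  · exact Or.inl hjE
  have hjX : j ∉ X := by
    intro hjX
    rcases hj.lt_or_eq with hlt | rfl
    · exact hjE ⟨hlt, hmemE.2 ⟨hlt, hjX⟩⟩
    · exact hm hjX
  have hseg : seg (↑E) j = seg X j :=
    seg_congr fun i hi => hmemE.trans (and_iff_right (by omega))
  refine Or.inr fun hext => hK j hjX ((hseg ▸ hext).mono hT ?_)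
  exact Finset.le_sup (Finset.mem_range.2 (Nat.lt_succ_of_le hj))

theorem notMem_of_certifies (hX : ∀ j, ¬ Extendible T (seg X j ++ [true]) → j ∉ X)
    {m : ℕ} {E : Finset ℕ} (hE : ↑E ⊆ X) {k : ℕ} (hc : Certifies T m E k) : m ∉ X := by
  have hdead {j : ℕ} (hj : j ≤ m) (hjE : ¬ (j < m ∧ j ∈ E)) (hseg : seg (↑E) j = seg X j) :
      j ∉ X :=
    hX j fun h => (hc j hj).resolve_left hjE (hseg ▸ h k)
  have hagree : ∀ i < m, i ∈ E ↔ i ∈ X := by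
    intro i
    induction i using Nat.strong_induction_on with
    | _ i ih =>
      intro hi
      refine ⟨fun h => hE h, fun hiX => by_contra fun hiE => ?_⟩
      exact hdead hi.le (fun h => hiE h.2) (seg_congr fun l hl => ih l hl (hl.trans hi)) hiX
  exact hdead le_rfl (fun h => h.1.false) (seg_congr hagree)

end Rightmost

theorem computablePred_not_extendsTo {T : Set (List Bool)} (hT : ComputablePred (· ∈ T)) :
    ComputablePred fun x : List Bool × ℕ => ¬ ExtendsTo T x.1 x.2 :=
  (ComputablePred.forall_mem (p := fun x μ => x.1 ++ μ ∉ T)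
    (primrec_bitStrings.to_comp.comp Computable.snd)
    (hT.not.comp (Computable.list_append.comp (Computable.fst.comp Computable.fst)
      Computable.snd))).of_eq
    fun x => by simp [ExtendsTo, mem_bitStrings]

theorem computablePred_certifies {T : Set (List Bool)} (hT : ComputablePred (· ∈ T)) :
    ComputablePred fun x : (ℕ × Finset ℕ) × ℕ => Certifies T x.1.1 x.1.2 x.2 := by
  open Primrec in
  have hleft : ComputablePred fun y : ((ℕ × Finset ℕ) × ℕ) × ℕ =>
      y.2 < y.1.1.1 ∧ y.2 ∈ y.1.1.2 :=
    (PrimrecPred.and (nat_lt.comp snd (fst.comp (fst.comp fst)))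
      (finset_mem.comp snd (snd.comp (fst.comp fst)))).computablePred
  open Primrec in
  have hright : ComputablePred fun y : ((ℕ × Finset ℕ) × ℕ) × ℕ =>
      ¬ ExtendsTo T (seg (↑y.1.1.2) y.2 ++ [true]) y.1.2 :=
    (computablePred_not_extendsTo hT).comp
      ((list_concat.comp (primrec_seg_coe.comp (snd.comp (fst.comp fst)) snd)
        (const true)).pair (snd.comp fst)).to_comp
  exact (ComputablePred.forall_lt
    (p := fun x j => (j < x.1.1 ∧ j ∈ x.1.2) ∨ ¬ ExtendsTo T (seg (↑x.1.2) j ++ [true]) x.2)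
    (Primrec.succ.comp (Primrec.fst.comp Primrec.fst)).to_comp (hleft.or hright)).of_eq
    fun x => by simp only [Certifies, Nat.lt_succ_iff]

theorem rightmost_path_enumLE_general (T : Set (List Bool)) (hT : ComputableTree T)
    (X : Set ℕ)
    (hrm : ∀ m : ℕ, m ∉ X ↔ ¬ ∃ Z : Set ℕ, IsPath T Z ∧ seg Z (m + 1) = seg X m ++ [true]) :
    EnumLE Xᶜ X ∧
      ∃ C : Set (ℕ × Finset ℕ), CEPred (· ∈ C) ∧
        ∀ m : ℕ, m ∉ X ↔ ∃ E : Finset ℕ, ↑E ⊆ X ∧ (m, E) ∈ C := by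
  let C : Set (ℕ × Finset ℕ) := {p | ∃ k, Certifies T p.1 p.2 k}
  have hturn := notMem_iff_not_extendible hT.1 hrm
  have hC (m : ℕ) : m ∉ X ↔ ∃ E : Finset ℕ, ↑E ⊆ X ∧ (m, E) ∈ C :=
    ⟨exists_certifies_of_notMem hT.1 fun j => (hturn j).1,
      fun ⟨_, hE, _, hc⟩ => notMem_of_certifies (fun j => (hturn j).2) hE hc⟩
  have hCce : CEPred (· ∈ C) := cePred_exists_of_computablePred (computablePred_certifies hT.2)
  exact ⟨⟨C, hCce, hC⟩, C, hCce, hC⟩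

/-- The rightmost path `X` through a computable tree satisfies `Xᶜ ≤_e X`, witnessed by
a c.e. set `C` of pairs `(m, E)`. -/
theorem rightmost_path_enumLE (T : Set (List Bool)) (hT : ComputableTree T)
    (X : Set ℕ) (hX : IsPath T X)
    (hrm : ∀ m : ℕ, m ∉ X ↔ ¬ ∃ Z : Set ℕ, IsPath T Z ∧ seg Z (m + 1) = seg X m ++ [true]) :
    EnumLE Xᶜ X ∧
      ∃ C : Set (ℕ × Finset ℕ), CEPred (· ∈ C) ∧
        ∀ m : ℕ, m ∉ X ↔ ∃ E : Finset ℕ, ↑E ⊆ X ∧ (m, E) ∈ C :=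
  rightmost_path_enumLE_general T hT X hrm
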